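/- Let R = [0,a]×[0,b] with a,b > 0, let A ⊆ [0,b] be Lebesgue measurable with Lebesgue measure m(A), and let Γ be the family of curves inside R connecting {0}×([0,b]∖A) to {a}×([0,b]∖A). With f_{s+ti}(x+yi) = (x/s−(t/s)y)+yi for s > 0, the liminf as s+|t| → ∞ of (1/(s + t²/s))·mod(f_{s+ti}(Γ)) is at least (b − 2m(A))/a. -/

import Mathlib

/-!
Inside the rectangle take the segments from `(0, y)` to `(a, y + δ)` with
`δ = a t / (s² + t²)`. Their images under the shear `f_{s+ti}` are the parallel segments
`u ↦ u V + y W`, `u ∈ [0, 1]`, with `W = f(i)`, and this tilt makes `V = f(a + δ i)` orthogonal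
to `W`, so that the segments are as short as possible: `‖V‖² = a² / (s² + t²)`. For any family
of parallel segments, Cauchy–Schwarz on each segment followed by Tonelli and the linear change
of variables `(u, y) ↦ u V + y W` bounds the modulus below by `|V × W| |G| / ‖V‖²`, which here
is `(s + t²/s) |G| / a`. The admissible heights `y` (both endpoints in `[0, b]`, neither in `A`)
have measure at least `b - |δ| - 2 m(A)`, and `|δ| ≤ 2a / (s + |t|) → 0`.
-/

open MeasureTheory

/-- Line integral of a density `ρ` along a curve `γ : ℝ → ℂ` parametrized on `[0,1]`. -/
noncomputable def curveIntegralDensity (ρ : ℂ → ℝ) (γ : ℝ → ℂ) : ℝ :=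
  ∫ t in (0:ℝ)..1, ρ (γ t) * ‖deriv γ t‖

/-- `ρ` is an allowable (admissible) metric for the curve family `Γ`. -/
def Allowable (ρ : ℂ → ℝ) (Γ : Set (ℝ → ℂ)) : Prop :=
  Measurable ρ ∧ (∀ z, 0 ≤ ρ z) ∧ ∀ γ ∈ Γ, 1 ≤ curveIntegralDensity ρ γ

/-- The modulus of a curve family. -/
noncomputable def modulus (Γ : Set (ℝ → ℂ)) : ENNReal :=
  ⨅ (ρ : ℂ → ℝ) (_ : Allowable ρ Γ), ∫⁻ z : ℂ, ENNReal.ofReal (ρ z ^ 2)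


open Complex
open Set

theorem sq_lintegral_le_lintegral_sq {α : Type*} [MeasurableSpace α] {μ : Measure α}
    [IsProbabilityMeasure μ] {f : α → ENNReal} (hf : AEMeasurable f μ) :
    (∫⁻ x, f x ∂μ) ^ 2 ≤ ∫⁻ x, f x ^ 2 ∂μ := by
  have hHolder := ENNReal.lintegral_mul_le_Lp_mul_Lq μ Real.HolderConjugate.two_two hf
    aemeasurable_const (g := fun _ => 1)
  simp only [Pi.mul_apply, mul_one, lintegral_const, measure_univ,
    ENNReal.rpow_two] at hHolder
  calc (∫⁻ x, f x ∂μ) ^ 2 ≤ ((∫⁻ x, f x ^ 2 ∂μ) ^ (1 / 2 : ℝ)) ^ 2 := by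
        gcongr; simpa using hHolder
    _ = ∫⁻ x, f x ^ 2 ∂μ := by
        rw [← ENNReal.rpow_two, ← ENNReal.rpow_mul]; norm_num

theorem ofReal_sq_intervalIntegral_le {g : ℝ → ℝ} (hg : ∀ u, 0 ≤ g u) :
    ENNReal.ofReal ((∫ u in (0:ℝ)..1, g u) ^ 2) ≤ ∫⁻ u in Ioc 0 1, ENNReal.ofReal (g u ^ 2) := by
  by_cases hint : IntervalIntegrable g volume 0 1
  · have : IsProbabilityMeasure (volume.restrict (Ioc (0:ℝ) 1)) := ⟨by simp⟩
    have hIoc := (intervalIntegrable_iff_integrableOn_Ioc_of_le zero_le_one).1 hint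
    rw [intervalIntegral.integral_of_le zero_le_one, ENNReal.ofReal_pow (integral_nonneg hg),
      ofReal_integral_eq_lintegral_ofReal hIoc (ae_of_all _ hg)]
    simp_rw [ENNReal.ofReal_pow (hg _)]
    exact sq_lintegral_le_lintegral_sq hIoc.aemeasurable.ennreal_ofReal
  · simp [intervalIntegral.integral_undef hint]

theorem lintegral_eq_abs_det_mul_lintegral_comp {E : Type*} [NormedAddCommGroup E]
    [NormedSpace ℝ E] [MeasurableSpace E] [BorelSpace E] [FiniteDimensional ℝ E]
    (μ : Measure E) [μ.IsAddHaarMeasure] {T : E →ₗ[ℝ] E} (hT : LinearMap.det T ≠ 0)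
    {g : E → ENNReal} (hg : Measurable g) :
    ∫⁻ x, g x ∂μ = ENNReal.ofReal |LinearMap.det T| * ∫⁻ x, g (T x) ∂μ := by
  rw [← lintegral_map hg T.continuous_of_finiteDimensional.measurable,
    Measure.map_linearMap_addHaar_eq_smul_addHaar μ hT, lintegral_smul_measure, smul_eq_mul,
    ← mul_assoc, ← ENNReal.ofReal_mul (abs_nonneg _), ← abs_mul, mul_inv_cancel₀ hT, abs_one,
    ENNReal.ofReal_one, one_mul]

theorem det_reLm_smulRight_add_imLm_smulRight (V W : ℂ) :
    LinearMap.det (reLm.smulRight V + imLm.smulRight W) = V.re * W.im - V.im * W.re := by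
  rw [← LinearMap.det_toMatrix basisOneI, Matrix.det_fin_two]
  simp [LinearMap.toMatrix_apply, mul_comm]

theorem le_modulus_of_segments_mem (V W : ℂ) (G : Set ℝ) {Γ : Set (ℝ → ℂ)}
    (hΓ : ∀ y ∈ G, (fun u : ℝ => u • V + y • W) ∈ Γ) :
    ENNReal.ofReal (|V.re * W.im - V.im * W.re| / ‖V‖ ^ 2) * volume G ≤ modulus Γ := by
  set κ := V.re * W.im - V.im * W.re
  by_cases hκ : κ = 0
  · simp [hκ]
  refine le_iInf₂ fun ρ ⟨hρm, hρ0, hρΓ⟩ => ?_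
  have hV : 0 < ‖V‖ := norm_pos_iff.2 fun h => hκ (by simp [κ, h])
  set F : ℝ × ℝ → ENNReal := fun p => ENNReal.ofReal (ρ (p.1 • V + p.2 • W) ^ 2)
  have hFm : Measurable F :=
    ENNReal.measurable_ofReal.comp ((hρm.comp (by fun_prop)).pow_const 2)
  have hslice : ∀ y ∈ G, ENNReal.ofReal (1 / ‖V‖ ^ 2) ≤ ∫⁻ u in Ioc 0 1, F (u, y) := by
    intro y hy
    have hderiv : ∀ u : ℝ, deriv (fun u : ℝ => u • V + y • W) u = V := fun u => by
      simpa using (((hasDerivAt_id u).smul_const V).add_const (y • W)).deriv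
    have hlength := hρΓ _ (hΓ y hy)
    simp only [curveIntegralDensity, hderiv, intervalIntegral.integral_mul_const] at hlength
    calc ENNReal.ofReal (1 / ‖V‖ ^ 2)
        ≤ ENNReal.ofReal ((∫ u in (0:ℝ)..1, ρ (u • V + y • W)) ^ 2) := by
          rw [one_div, ← inv_pow]
          gcongr
          rw [inv_le_iff_one_le_mul₀ hV]
          linarith
      _ ≤ _ := ofReal_sq_intervalIntegral_le fun u => hρ0 _
  have hchange : ∫⁻ z, ENNReal.ofReal (ρ z ^ 2) = ENNReal.ofReal |κ| * ∫⁻ p, F p := by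
    rw [lintegral_eq_abs_det_mul_lintegral_comp volume
        ((det_reLm_smulRight_add_imLm_smulRight V W).trans_ne hκ)
        (g := fun z => ENNReal.ofReal (ρ z ^ 2)) (hρm.pow_const 2).ennreal_ofReal,
      det_reLm_smulRight_add_imLm_smulRight,
      ← volume_preserving_equiv_real_prod.lintegral_comp hFm]
    rfl
  calc ENNReal.ofReal (|κ| / ‖V‖ ^ 2) * volume G
      = ENNReal.ofReal |κ| * ∫⁻ _ in G, ENNReal.ofReal (1 / ‖V‖ ^ 2) := by
        rw [setLIntegral_const, div_eq_mul_one_div, ENNReal.ofReal_mul (abs_nonneg _), mul_assoc]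
    _ ≤ ENNReal.ofReal |κ| * ∫⁻ y in G, ∫⁻ u in Ioc 0 1, F (u, y) :=
        mul_le_mul_right (setLIntegral_mono hFm.lintegral_prod_left' hslice) _
    _ = ENNReal.ofReal |κ| * ∫⁻ p in Ioc 0 1 ×ˢ G, F p := by
        rw [Measure.volume_eq_prod, setLIntegral_prod_symm _ hFm.aemeasurable]
    _ ≤ ENNReal.ofReal |κ| * ∫⁻ p, F p :=
        mul_le_mul_right (setLIntegral_le_lintegral _ _) _
    _ = ∫⁻ z, ENNReal.ofReal (ρ z ^ 2) := hchange.symm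

/-- The map `f_{s+ti}`. -/
noncomputable def shear (s t : ℝ) (z : ℂ) : ℂ := ((z.re / s - (t / s) * z.im : ℝ) : ℂ) + z.im * I

def crossingCurves (a b : ℝ) (A : Set ℝ) : Set (ℝ → ℂ) :=
  {γ | ContDiff ℝ 1 γ ∧
    (∀ u ∈ Icc (0:ℝ) 1, (γ u).re ∈ Icc 0 a ∧ (γ u).im ∈ Icc 0 b) ∧
    (γ 0).re = 0 ∧ (γ 0).im ∉ A ∧ (γ 1).re = a ∧ (γ 1).im ∉ A}

@[simp]
theorem shear_re (s t : ℝ) (z : ℂ) : (shear s t z).re = z.re / s - t / s * z.im := by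
  simp [shear]

@[simp]
theorem shear_im (s t : ℝ) (z : ℂ) : (shear s t z).im = z.im := by
  simp [shear]

theorem sq_norm_shear_tilted {s : ℝ} (hs : 0 < s) (a t : ℝ) :
    ‖shear s t ⟨a, a * t / (s ^ 2 + t ^ 2)⟩‖ ^ 2 = a ^ 2 / (s ^ 2 + t ^ 2) := by
  rw [Complex.sq_norm, Complex.normSq_apply]
  simp only [shear_re, shear_im]
  field_simp
  ring

theorem shear_cross (s t : ℝ) (P Q : ℂ) :
    (shear s t P).re * (shear s t Q).im - (shear s t P).im * (shear s t Q).re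
      = (P.re * Q.im - P.im * Q.re) / s := by
  simp only [shear_re, shear_im]
  ring

theorem shear_comp_segment (s t : ℝ) (P Q : ℂ) (y : ℝ) :
    shear s t ∘ (fun u : ℝ => u • P + y • Q) = fun u : ℝ => u • shear s t P + y • shear s t Q := by
  funext u
  apply Complex.ext <;> simp only [Function.comp_apply, shear_re, shear_im, add_re, add_im,
    real_smul, mul_re, mul_im, ofReal_re, ofReal_im] <;> ring

theorem segment_mem_crossingCurves {a b δ y : ℝ} {A : Set ℝ} (ha : 0 ≤ a)
    (hy : y ∈ Icc 0 b) (hyδ : y + δ ∈ Icc 0 b) (hyA : y ∉ A) (hyδA : y + δ ∉ A) :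
    (fun u : ℝ => u • (⟨a, δ⟩ : ℂ) + y • I) ∈ crossingCurves a b A := by
  have hre : ∀ u : ℝ, (u • (⟨a, δ⟩ : ℂ) + y • I).re = u * a := fun u => by simp
  have him : ∀ u : ℝ, (u • (⟨a, δ⟩ : ℂ) + y • I).im = y + u * δ := fun u => by simp [add_comm]
  refine ⟨by fun_prop, fun u ⟨hu0, hu1⟩ => ⟨?_, ?_⟩, ?_, ?_, ?_, ?_⟩ <;> simp only [hre, him]
  · exact ⟨by positivity, by nlinarith⟩
  · constructor <;> nlinarith [hy.1, hy.2, hyδ.1, hyδ.2]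
  · ring
  · simpa using hyA
  · ring
  · simpa using hyδA

theorem ofReal_le_volume_Icc_inter_preimage_add_diff {A : Set ℝ} (hA : volume A ≠ ⊤) (b δ : ℝ) :
    ENNReal.ofReal (b - |δ| - 2 * (volume A).toReal)
      ≤ volume ((Icc 0 b ∩ (· + δ) ⁻¹' Icc 0 b) \ (A ∪ (· + δ) ⁻¹' A)) := by
  have hI : volume (Icc 0 b ∩ (· + δ) ⁻¹' Icc 0 b) = ENNReal.ofReal (b - |δ|) := by
    rw [preimage_add_const_Icc, Icc_inter_Icc, Real.volume_Icc]
    congr 1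
    rcases le_total 0 δ with h | h
    · rw [max_eq_left (by linarith), min_eq_right (by linarith), abs_of_nonneg h]; ring
    · rw [max_eq_right (by linarith), min_eq_left (by linarith), abs_of_nonpos h]; ring
  have hAA : volume (A ∪ (· + δ) ⁻¹' A) ≤ ENNReal.ofReal (2 * (volume A).toReal) := by
    calc volume (A ∪ (· + δ) ⁻¹' A) ≤ volume A + volume ((· + δ) ⁻¹' A) := measure_union_le _ _
      _ = ENNReal.ofReal (2 * (volume A).toReal) := by
        rw [measure_preimage_add_right, ← two_mul, ENNReal.ofReal_mul zero_le_two,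
          ENNReal.ofReal_toReal hA, ENNReal.ofReal_ofNat]
  calc ENNReal.ofReal (b - |δ| - 2 * (volume A).toReal)
      = ENNReal.ofReal (b - |δ|) - ENNReal.ofReal (2 * (volume A).toReal) :=
        ENNReal.ofReal_sub _ (by positivity)
    _ ≤ volume (Icc 0 b ∩ (· + δ) ⁻¹' Icc 0 b) - volume (A ∪ (· + δ) ⁻¹' A) :=
        tsub_le_tsub hI.ge hAA
    _ ≤ _ := le_measure_sdiff

theorem abs_div_sq_add_sq_le {s t ε : ℝ} (hs : 0 < s) (hε : 0 < ε) (h : 2 / ε ≤ s + |t|) :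
    |t| / (s ^ 2 + t ^ 2) ≤ ε := by
  calc |t| / (s ^ 2 + t ^ 2) ≤ 2 / (s + |t|) := by
        rw [div_le_div_iff₀ (by positivity) (by positivity)]
        nlinarith [sq_abs t, sq_nonneg (s - |t|), abs_nonneg t]
    _ ≤ ε := (div_le_comm₀ hε (by positivity)).1 h

theorem le_modulus_shear_image_crossingCurves {a s : ℝ} (ha : 0 < a) (hs : 0 < s)
    (b t : ℝ) (A : Set ℝ) :
    let δ := a * t / (s ^ 2 + t ^ 2)
    ENNReal.ofReal ((s + t ^ 2 / s) / a)
        * volume ((Icc 0 b ∩ (· + δ) ⁻¹' Icc 0 b) \ (A ∪ (· + δ) ⁻¹' A))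
      ≤ modulus ((shear s t ∘ ·) '' crossingCurves a b A) := by
  intro δ
  set V := shear s t ⟨a, δ⟩
  set W := shear s t I
  have hcoeff : |V.re * W.im - V.im * W.re| / ‖V‖ ^ 2 = (s + t ^ 2 / s) / a := by
    rw [shear_cross, sq_norm_shear_tilted hs]
    simp only [I_re, I_im, mul_one, mul_zero, sub_zero, abs_div, abs_of_pos ha, abs_of_pos hs]
    field_simp
  rw [← hcoeff]
  exact le_modulus_of_segments_mem V W _ fun y ⟨⟨hy, hyδ⟩, hyA⟩ =>
    ⟨_, segment_mem_crossingCurves ha.le hy hyδ (fun h => hyA (.inl h)) (fun h => hyA (.inr h)),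
      shear_comp_segment s t _ _ y⟩

theorem liminf_modulus_rectangle_general (a b : ℝ) (ha : 0 < a)
    (A : Set ℝ) (hAsub : A ⊆ Set.Icc 0 b)
    (Γ : Set (ℝ → ℂ))
    (hΓ : Γ = {γ : ℝ → ℂ | ContDiff ℝ 1 γ ∧
      (∀ u ∈ Set.Icc (0:ℝ) 1, (γ u).re ∈ Set.Icc 0 a ∧ (γ u).im ∈ Set.Icc 0 b) ∧
      (γ 0).re = 0 ∧ (γ 0).im ∉ A ∧ (γ 1).re = a ∧ (γ 1).im ∉ A}) :
    ∀ ε > (0:ℝ), ∃ M : ℝ, ∀ s t : ℝ, 0 < s → M ≤ s + |t| →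
      ENNReal.ofReal ((b - 2 * (MeasureTheory.volume A).toReal) / a - ε)
        ≤ modulus ((fun γ : ℝ → ℂ =>
              (fun z : ℂ => ((z.re / s - (t / s) * z.im : ℝ) : ℂ) + z.im * I) ∘ γ) '' Γ)
            / ENNReal.ofReal (s + t ^ 2 / s) := by
  subst hΓ
  intro ε hε
  refine ⟨2 / ε, fun s t hs hM => ?_⟩
  set m := (volume A).toReal
  set δ := a * t / (s ^ 2 + t ^ 2)
  have hG : ENNReal.ofReal (b - |δ| - 2 * m)
      ≤ volume ((Icc 0 b ∩ (· + δ) ⁻¹' Icc 0 b) \ (A ∪ (· + δ) ⁻¹' A)) :=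
    ofReal_le_volume_Icc_inter_preimage_add_diff
      ((measure_mono hAsub).trans_lt measure_Icc_lt_top).ne b δ
  have hδ : |δ| / a ≤ ε := by
    rw [abs_div, abs_mul, abs_of_pos ha, abs_of_pos (by positivity : 0 < s ^ 2 + t ^ 2),
      mul_div_assoc, mul_div_cancel_left₀ _ ha.ne']
    exact abs_div_sq_add_sq_le hs hε hM
  have hreal :
      ((b - 2 * m) / a - ε) * (s + t ^ 2 / s) ≤ (s + t ^ 2 / s) / a * (b - |δ| - 2 * m) := by
    rw [mul_comm, div_mul_eq_mul_div, mul_div_assoc]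
    gcongr
    linarith [show (b - |δ| - 2 * m) / a = (b - 2 * m) / a - |δ| / a by ring]
  rw [ENNReal.le_div_iff_mul_le (.inl (by positivity)) (.inl ENNReal.ofReal_ne_top)]
  calc ENNReal.ofReal ((b - 2 * m) / a - ε) * ENNReal.ofReal (s + t ^ 2 / s)
      ≤ ENNReal.ofReal ((s + t ^ 2 / s) / a) * ENNReal.ofReal (b - |δ| - 2 * m) := by
        rw [← ENNReal.ofReal_mul' (by positivity), ← ENNReal.ofReal_mul (by positivity)]
        exact ENNReal.ofReal_le_ofReal hreal
    _ ≤ _ := by gcongr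
    _ ≤ _ := le_modulus_shear_image_crossingCurves ha hs b t A

/-- Lemma 5.3 of the paper: for the family `Γ` of curves in the rectangle `[0,a]×[0,b]`
joining `{0}×([0,b]∖A)` to `{a}×([0,b]∖A)`, the liminf as `s+|t| → ∞` of
`(1/(s+t²/s))·mod(f_{s+ti}(Γ))` is at least `(b − 2m(A))/a`. -/
theorem liminf_modulus_rectangle (a b : ℝ) (ha : 0 < a) (hb : 0 < b)
    (A : Set ℝ) (hA : MeasurableSet A) (hAsub : A ⊆ Set.Icc 0 b)
    (Γ : Set (ℝ → ℂ))
    (hΓ : Γ = {γ : ℝ → ℂ | ContDiff ℝ 1 γ ∧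
      (∀ u ∈ Set.Icc (0:ℝ) 1, (γ u).re ∈ Set.Icc 0 a ∧ (γ u).im ∈ Set.Icc 0 b) ∧
      (γ 0).re = 0 ∧ (γ 0).im ∉ A ∧ (γ 1).re = a ∧ (γ 1).im ∉ A}) :
    ∀ ε > (0:ℝ), ∃ M : ℝ, ∀ s t : ℝ, 0 < s → M ≤ s + |t| →
      ENNReal.ofReal ((b - 2 * (MeasureTheory.volume A).toReal) / a - ε)
        ≤ modulus ((fun γ : ℝ → ℂ =>
              (fun z : ℂ => ((z.re / s - (t / s) * z.im : ℝ) : ℂ) + z.im * I) ∘ γ) '' Γ)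
            / ENNReal.ofReal (s + t ^ 2 / s) :=
  liminf_modulus_rectangle_general a b ha A hAsub Γ hΓ
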